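/- Let R be a saturated transfer system on a finite modular lattice M, and let R_cov denote the set of covering relations of M that belong to R. Then R_cov is a saturated cover on M. -/

import Mathlib

/-! In a covering diamond the restriction axiom gives the two "downward" cases of the
3-out-of-4 rule, and saturation applied to `x ⊓ y R y ≤ x ⊔ y` (with `x ⊓ y R x R x ⊔ y`)
gives the two "upward" ones; in a modular lattice, restricting a covering relation
again yields a covering relation. -/

/-- A transfer system on a lattice `M`: a partial order refining `≤`
(reflexive, transitive, and refining `≤`, hence antisymmetric) that is
closed under restriction. -/
structure TransferSystem (M : Type*) [Lattice M] where
  rel : M → M → Prop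
  refl : ∀ x, rel x x
  trans : ∀ x y z, rel x y → rel y z → rel x z
  le_of_rel : ∀ x y, rel x y → x ≤ y
  restrict : ∀ x y z, rel x z → y ≤ z → rel (x ⊓ y) y

/-- A transfer system is saturated when `x R y ≤ z` and `x R z` imply `y R z`. -/
def TransferSystem.Saturated {M : Type*} [Lattice M] (R : TransferSystem M) : Prop :=
  ∀ x y z, R.rel x y → y ≤ z → R.rel x z → R.rel y z

/-- A saturated cover on a lattice: a set `Q` of covering relations closed
under restriction (condition 1) and satisfying the 3-out-of-4 rule on
covering diamonds (condition 2). -/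
def IsSaturatedCover {M : Type*} [Lattice M] (Q : M → M → Prop) : Prop :=
  (∀ x y, Q x y → x ⋖ y) ∧
  (∀ x y, Q x (x ⊔ y) → Q (x ⊓ y) y) ∧
  (∀ x y, x ⊓ y ⋖ x → x ⊓ y ⋖ y → x ⋖ x ⊔ y → y ⋖ x ⊔ y →
    (Q (x ⊓ y) x ∧ Q (x ⊓ y) y ∧ Q x (x ⊔ y) → Q y (x ⊔ y)) ∧
    (Q (x ⊓ y) x ∧ Q (x ⊓ y) y ∧ Q y (x ⊔ y) → Q x (x ⊔ y)) ∧
    (Q (x ⊓ y) x ∧ Q x (x ⊔ y) ∧ Q y (x ⊔ y) → Q (x ⊓ y) y) ∧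
    (Q (x ⊓ y) y ∧ Q x (x ⊔ y) ∧ Q y (x ⊔ y) → Q (x ⊓ y) x))

namespace TransferSystem

variable {M : Type*} [Lattice M] (R : TransferSystem M) {w x y z : M}

theorem inf_rel_of_rel_sup_left (h : R.rel x (x ⊔ y)) : R.rel (x ⊓ y) y :=
  R.restrict x y (x ⊔ y) h le_sup_right

theorem inf_rel_of_rel_sup_right (h : R.rel y (x ⊔ y)) : R.rel (x ⊓ y) x := by
  simpa only [inf_comm] using R.restrict y x (x ⊔ y) h le_sup_left

variable {R}

theorem Saturated.rel_of_rel_of_rel (hsat : R.Saturated) (hwy : R.rel w y) (hyz : y ≤ z)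
    (hwx : R.rel w x) (hxz : R.rel x z) : R.rel y z :=
  hsat w y z hwy hyz (R.trans w x z hwx hxz)

end TransferSystem

theorem stmt10_general {M : Type*} [Lattice M] [IsModularLattice M]
    (R : TransferSystem M) (hsat : R.Saturated) :
    IsSaturatedCover (fun x y => R.rel x y ∧ x ⋖ y) := by
  refine ⟨fun x y h => h.2, fun x y h => ?_, fun x y h1 h2 h3 h4 => ?_⟩
  · exact ⟨R.inf_rel_of_rel_sup_left h.1, inf_covBy_of_covBy_sup_left h.2⟩
  refine ⟨fun ⟨hx, hy, hxs⟩ => ?_, fun ⟨hx, hy, hys⟩ => ?_,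
    fun ⟨_, hxs, _⟩ => ?_, fun ⟨_, _, hys⟩ => ?_⟩
  · exact ⟨hsat.rel_of_rel_of_rel hy.1 le_sup_right hx.1 hxs.1, h4⟩
  · exact ⟨hsat.rel_of_rel_of_rel hx.1 le_sup_left hy.1 hys.1, h3⟩
  · exact ⟨R.inf_rel_of_rel_sup_left hxs.1, h2⟩
  · exact ⟨R.inf_rel_of_rel_sup_right hys.1, h1⟩

/-- the set of covering relations of a saturated transfer
system on a finite modular lattice is a saturated cover. -/
theorem stmt10 {M : Type*} [Lattice M] [Finite M] [IsModularLattice M]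
    (R : TransferSystem M) (hsat : R.Saturated) :
    IsSaturatedCover (fun x y => R.rel x y ∧ x ⋖ y) :=
  stmt10_general R hsat
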